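/- A nonzero complex number λ is an eigenvalue of A — i.e., there exists a nonzero x ∈ D(A) with A x = λ x — if and only if Σ_{k=1}^∞ |b_k(λ)| p_k < ∞ and p_0 − λ + Σ_{k=1}^∞ b_k(λ) p_k = 0. -/

import Mathlib

open scoped BigOperators

noncomputable section

/-- Tail sum `q_l = Σ_{k ≥ l} p_k`. -/
def qtail (p : ℕ → ℝ) (l : ℕ) : ℝ := ∑' k, p (l + k)

/-- The operator `A` on complex sequences: `(A v)(l) = (1/q_l) Σ_{k=l}^∞ p_k v(k)`. -/
def opA (p : ℕ → ℝ) (v : ℕ → ℂ) : ℕ → ℂ :=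
  fun l => (1 / (qtail p l : ℂ)) * ∑' k, (p (l + k) : ℂ) * v (l + k)

/-- Membership in the domain `D(A) = {v : Σ_k p_k |v(k)| < ∞}`. -/
def memDA (p : ℕ → ℝ) (v : ℕ → ℂ) : Prop :=
  Summable fun k => p k * ‖v k‖

/-- `b_k(λ) = ∏_{i=0}^{k-1} (λ q_i - p_i)/(λ q_{i+1})`. -/
def bcoef (p : ℕ → ℝ) (lam : ℂ) (k : ℕ) : ℂ :=
  ∏ i ∈ Finset.range k, (lam * qtail p i - p i) / (lam * qtail p (i + 1))

/-! If `A x = λ x`, then `Σ_{k ≥ l} p_k x_k = λ q_l x_l` for every `l`. Subtracting the identities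
at `l` and `l + 1` gives the recursion `λ q_{l+1} x_{l+1} = (λ q_l - p_l) x_l`, whose solutions are
exactly the multiples of `b(λ)` (with `b_0(λ) = 1`); conversely, the recursion and the identity at
`l = 0`, which for `b(λ)` reads `p_0 + Σ_{k ≥ 1} b_k(λ) p_k = λ`, give all tail identities by
induction. So `λ` is an eigenvalue iff `b(λ)` itself lies in `D(A)` and satisfies the identity at
`l = 0`. -/

theorem tsum_nat_add_eq_add_tsum {G : Type*} [AddCommGroup G] [TopologicalSpace G]
    [IsTopologicalAddGroup G] [T2Space G] {f : ℕ → G} (hf : Summable f) (l : ℕ) :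
    ∑' k, f (l + k) = f l + ∑' k, f (l + 1 + k) := by
  have hl : Summable fun k => f (l + k) := by
    simpa only [add_comm l] using (summable_nat_add_iff l).mpr hf
  simp only [hl.tsum_eq_zero_add, add_zero, add_assoc l 1, add_comm 1]

def tailSum (p : ℕ → ℝ) (v : ℕ → ℂ) (l : ℕ) : ℂ := ∑' k, (p (l + k) : ℂ) * v (l + k)

section

variable {p : ℕ → ℝ} {lam : ℂ} {v : ℕ → ℂ}

lemma qtail_zero (hsum : HasSum p 1) : qtail p 0 = 1 := by
  simpa [qtail] using hsum.tsum_eq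

lemma qtail_pos (hp : ∀ k, 0 < p k) (hs : Summable p) (l : ℕ) : 0 < qtail p l :=
  (hs.comp_injective (add_right_injective l)).tsum_pos (fun _ => (hp _).le) 0 (hp _)

lemma ofReal_qtail_ne_zero (hp : ∀ k, 0 < p k) (hs : Summable p) (l : ℕ) :
    (qtail p l : ℂ) ≠ 0 :=
  Complex.ofReal_ne_zero.mpr (qtail_pos hp hs l).ne'

lemma qtail_succ (hs : Summable p) (l : ℕ) : qtail p l = p l + qtail p (l + 1) :=
  tsum_nat_add_eq_add_tsum hs l

lemma bcoef_zero : bcoef p lam 0 = 1 := Finset.prod_range_zero _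

lemma bcoef_succ_mul (hp : ∀ k, 0 < p k) (hs : Summable p) (hlam : lam ≠ 0) (k : ℕ) :
    lam * qtail p (k + 1) * bcoef p lam (k + 1) = (lam * qtail p k - p k) * bcoef p lam k := by
  have hq := ofReal_qtail_ne_zero hp hs (k + 1)
  rw [bcoef, Finset.prod_range_succ, ← bcoef]
  field_simp

lemma memDA_iff_summable_succ : memDA p v ↔ Summable fun k => ‖v (k + 1)‖ * p (k + 1) := by
  simp only [memDA, ← summable_nat_add_iff 1 (f := fun k => p k * ‖v k‖), mul_comm]

lemma memDA_smul_iff {c : ℂ} (hc : c ≠ 0) : memDA p (c • v) ↔ memDA p v := by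
  simp only [memDA, Pi.smul_apply, smul_eq_mul, norm_mul, mul_left_comm (p _)]
  exact summable_mul_left_iff (norm_ne_zero_iff.mpr hc)

lemma summable_mul_of_memDA (hp : ∀ k, 0 ≤ p k) (hv : memDA p v) :
    Summable fun k => (p k : ℂ) * v k :=
  .of_norm <| hv.congr fun k => by rw [norm_mul, Complex.norm_real, Real.norm_of_nonneg (hp k)]

lemma tailSum_succ (hp : ∀ k, 0 ≤ p k) (hv : memDA p v) (l : ℕ) :
    tailSum p v l = p l * v l + tailSum p v (l + 1) :=
  tsum_nat_add_eq_add_tsum (summable_mul_of_memDA hp hv) l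

lemma tailSum_smul (c : ℂ) (l : ℕ) : tailSum p (c • v) l = c * tailSum p v l := by
  simp only [tailSum, Pi.smul_apply, smul_eq_mul, ← tsum_mul_left, mul_left_comm c]

lemma tailSum_bcoef_zero (hp : ∀ k, 0 ≤ p k) (hb : memDA p (bcoef p lam)) :
    tailSum p (bcoef p lam) 0 = p 0 + ∑' k, bcoef p lam (k + 1) * p (k + 1) := by
  rw [tailSum_succ hp hb 0, bcoef_zero, mul_one, tailSum]
  simp only [zero_add, add_comm 1, mul_comm]

lemma opA_eq_mul_iff (hp : ∀ k, 0 < p k) (hs : Summable p) :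
    opA p v = (fun l => lam * v l) ↔ ∀ l, tailSum p v l = lam * qtail p l * v l := by
  refine funext_iff.trans (forall_congr' fun l => ?_)
  rw [opA, ← tailSum, one_div_mul_eq_div, div_eq_iff (ofReal_qtail_ne_zero hp hs l)]
  ring_nf

lemma tailSum_eq_iff_recursion (hp : ∀ k, 0 ≤ p k) (hsum : HasSum p 1) (hv : memDA p v) :
    (∀ l, tailSum p v l = lam * qtail p l * v l) ↔
      tailSum p v 0 = lam * v 0 ∧
        ∀ l, lam * qtail p (l + 1) * v (l + 1) = (lam * qtail p l - p l) * v l := by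
  have hq0 : (qtail p 0 : ℂ) = 1 := by rw [qtail_zero hsum, Complex.ofReal_one]
  constructor
  · intro h
    refine ⟨by rw [h, hq0, mul_one], fun l => ?_⟩
    linear_combination h l - h (l + 1) - tailSum_succ hp hv l
  · rintro ⟨h0, hrec⟩ l
    induction l with
    | zero => rw [h0, hq0, mul_one]
    | succ l ih =>
      linear_combination ih - hrec l - tailSum_succ hp hv l

lemma recursion_iff_eq_smul_bcoef (hp : ∀ k, 0 < p k) (hs : Summable p) (hlam : lam ≠ 0) :
    (∀ l, lam * qtail p (l + 1) * v (l + 1) = (lam * qtail p l - p l) * v l) ↔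
      v = v 0 • bcoef p lam := by
  constructor
  · intro hrec
    funext l
    induction l with
    | zero => simp [bcoef_zero]
    | succ l ih =>
      refine mul_left_cancel₀ (mul_ne_zero hlam (ofReal_qtail_ne_zero hp hs (l + 1))) ?_
      simp only [Pi.smul_apply, smul_eq_mul] at ih ⊢
      linear_combination hrec l + (lam * qtail p l - p l) * ih -
        v 0 * bcoef_succ_mul hp hs hlam l
  · intro hv l
    rw [hv]
    simp only [Pi.smul_apply, smul_eq_mul]
    linear_combination v 0 * bcoef_succ_mul hp hs hlam l

lemma opA_eq_mul_iff_of_memDA (hp : ∀ k, 0 < p k) (hsum : HasSum p 1) (hlam : lam ≠ 0)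
    (hv : memDA p v) :
    opA p v = (fun l => lam * v l) ↔ tailSum p v 0 = lam * v 0 ∧ v = v 0 • bcoef p lam := by
  rw [opA_eq_mul_iff hp hsum.summable, tailSum_eq_iff_recursion (fun k => (hp k).le) hsum hv,
    recursion_iff_eq_smul_bcoef hp hsum.summable hlam]

end

/-- A nonzero `λ ∈ ℂ` is an eigenvalue of `A` iff `Σ_{k≥1} |b_k(λ)| p_k < ∞` and
`p_0 − λ + Σ_{k≥1} b_k(λ) p_k = 0`. -/
theorem eigenvalue_iff
    (p : ℕ → ℝ) (hp : ∀ k, 0 < p k) (hsum : HasSum p 1)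
    (lam : ℂ) (hlam : lam ≠ 0) :
    (∃ x : ℕ → ℂ, x ≠ 0 ∧ memDA p x ∧ opA p x = fun l => lam * x l) ↔
      (Summable fun k : ℕ => ‖bcoef p lam (k + 1)‖ * p (k + 1)) ∧
        (p 0 : ℂ) - lam + ∑' k : ℕ, bcoef p lam (k + 1) * (p (k + 1) : ℂ) = 0 := by
  have hp' : ∀ k, 0 ≤ p k := fun k => (hp k).le
  rw [← memDA_iff_summable_succ]
  constructor
  · rintro ⟨x, hx0, hx, heig⟩
    obtain ⟨hS0, hxb⟩ := (opA_eq_mul_iff_of_memDA hp hsum hlam hx).1 heig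
    have hc : x 0 ≠ 0 := fun h => hx0 (by rw [hxb, h, zero_smul])
    have hb : memDA p (bcoef p lam) := (memDA_smul_iff hc).1 (hxb ▸ hx)
    have hSb : tailSum p (bcoef p lam) 0 = lam :=
      mul_left_cancel₀ hc (by rw [← tailSum_smul, ← hxb, hS0, mul_comm])
    exact ⟨hb, by linear_combination hSb - tailSum_bcoef_zero hp' hb⟩
  · rintro ⟨hb, heq⟩
    refine ⟨bcoef p lam, fun h => by simpa [bcoef_zero] using congrFun h 0, hb, ?_⟩
    rw [opA_eq_mul_iff_of_memDA hp hsum hlam hb, bcoef_zero, one_smul, mul_one]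
    exact ⟨by linear_combination tailSum_bcoef_zero hp' hb + heq, rfl⟩
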